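/- arXiv:2209.15632 — 4 statements merged into one kernel-verified Lean document; each statement's English description precedes it below -/
import Mathlib

section
/- For a positive integer N ≥ 1, let θ = π/(2N) + arctan((1/3)·tan(π/(2N))). Then tan(θ) = 2·sin(π/N)/(1 + 2·cos(π/N)). -/
set_option maxHeartbeats 1000000


open Real

theorem tan_theta_eq (N : ℕ) (hN : 2 ≤ N) :
    Real.tan (π / (2 * N) + Real.arctan ((1 / 3) * Real.tan (π / (2 * N)))) =
      2 * Real.sin (π / N) / (1 + 2 * Real.cos (π / N)) := by
  have hNpos : (0:ℝ) < N := by positivity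
  set α : ℝ := π / (2 * N) with hα
  have hαpos : 0 < α := by positivity
  have hαle : α ≤ π / 4 := by
    rw [hα]
    rw [div_le_div_iff₀ (by positivity) (by norm_num)]
    have : (2:ℝ) ≤ (N:ℝ) := by exact_mod_cast hN
    nlinarith [pi_pos]
  have hαlt : α < π / 2 := lt_of_le_of_lt hαle (by linarith [pi_pos])
  have hc : 0 < Real.cos α := Real.cos_pos_of_mem_Ioo ⟨by linarith, hαlt⟩
  have ht0 : 0 < Real.tan α := Real.tan_pos_of_pos_of_lt_pi_div_two hαpos hαlt
  have ht1 : Real.tan α ≤ 1 := by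
    have := Real.strictMonoOn_tan.monotoneOn (Set.mem_Ioo.2 ⟨by linarith, hαlt⟩)
      (Set.mem_Ioo.2 ⟨by linarith [pi_pos], by linarith [pi_pos]⟩) hαle
    simpa [Real.tan_pi_div_four] using this
  set t : ℝ := Real.tan α with htdef
  have hadd : Real.tan (α + Real.arctan ((1/3) * t)) =
      (t + (1/3) * t) / (1 - t * ((1/3) * t)) := by
    rw [Real.tan_add' ⟨?_, ?_⟩, Real.tan_arctan]
    · intro k hk
      have h1 : (0:ℝ) < (2 * k + 1) * π / 2 := hk ▸ hαpos
      have h2 : (2 * k + 1) * π / 2 < π / 2 := hk ▸ hαlt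
      have hk1 : (0:ℝ) < 2 * k + 1 := by
        by_contra h
        push_neg at h
        nlinarith [pi_pos]
      have hk2 : (2:ℝ) * k + 1 < 1 := by nlinarith [pi_pos]
      have : (0:ℤ) < 2 * k + 1 := by exact_mod_cast hk1
      have : (2:ℤ) * k + 1 < 1 := by exact_mod_cast hk2
      omega
    · intro l hl
      have hb1 : -(π/2) < Real.arctan ((1/3) * t) := Real.neg_pi_div_two_lt_arctan _
      have hb2 : Real.arctan ((1/3) * t) < π/2 := Real.arctan_lt_pi_div_two _
      rw [hl] at hb1 hb2
      have hl1 : (-1:ℝ) < 2 * l + 1 := by nlinarith [pi_pos]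
      have hl2 : (2:ℝ) * l + 1 < 1 := by nlinarith [pi_pos]
      have : (-1:ℤ) < 2 * l + 1 := by exact_mod_cast hl1
      have : (2:ℤ) * l + 1 < 1 := by exact_mod_cast hl2
      omega
  have hπN : π / N = 2 * α := by
    rw [hα]; field_simp
  rw [hadd, hπN, Real.sin_two_mul, Real.cos_two_mul]
  have hts : t = Real.sin α / Real.cos α := Real.tan_eq_sin_div_cos α
  have hs2 : Real.sin α ^ 2 = 1 - Real.cos α ^ 2 := by
    nlinarith [Real.sin_sq_add_cos_sq α]
  have hcge : Real.cos (π/4) ≤ Real.cos α := by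
    apply Real.cos_le_cos_of_nonneg_of_le_pi (le_of_lt hαpos) (by linarith [pi_pos]) hαle
  rw [Real.cos_pi_div_four] at hcge
  have hc2 : (1:ℝ)/2 ≤ Real.cos α ^ 2 := by nlinarith [Real.sqrt_nonneg 2, Real.sq_sqrt (by norm_num : (2:ℝ) ≥ 0)]
  have hden1 : 1 - t * ((1/3) * t) ≠ 0 := by nlinarith
  have hden2 : 1 + 2 * (2 * Real.cos α ^ 2 - 1) ≠ 0 := by nlinarith
  rw [div_eq_div_iff hden1 hden2]
  rw [hts]
  field_simp
  linear_combination 4 * Real.sin α * hs2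
end

section
/- Let N ≥ 2, θ = π/(2N) + arctan((1/3)·tan(π/(2N))), and r > 0. Define control points P₀ = r(cos 0, sin 0), P₁ = (r/cos θ)(cos θ, sin θ), P₂ = (r/cos θ)(cos(2π/N − θ), sin(2π/N − θ)), P₃ = r(cos(2π/N), sin(2π/N)), and weights w₁ = w₂ = (1/3)(1 + 2cos(π/N)). Then ‖P₁ − P₀‖ = r·tan(θ) = 2r·sin(π/N)/(1 + 2cos(π/N)). -/
open Real

private lemma aux_lt {s c : ℝ} (hs : 0 < s) (hc : 0 < c) (hsc : s ≤ c) :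
    s * (1 / 3 * (s / c)) < c := by
  have h4 : s * ((1:ℝ)/3 * (s / c)) = s ^ 2 / (3 * c) := by field_simp
  rw [h4, div_lt_iff₀ (by positivity)]
  nlinarith

private lemma aux_key {s c : ℝ} (hs : 0 < s) (hc : 0 < c) (hsc : s ≤ c)
    (hp : s ^ 2 + c ^ 2 = 1) :
    (s + c * (1 / 3 * (s / c))) / (c - s * (1 / 3 * (s / c))) =
      2 * (2 * s * c) / (1 + 2 * (2 * c ^ 2 - 1)) := by
  have hd1 : 0 < c - s * (1 / 3 * (s / c)) := sub_pos.2 (aux_lt hs hc hsc)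
  have hd2 : (0:ℝ) < 1 + 2 * (2 * c ^ 2 - 1) := by nlinarith
  rw [div_eq_div_iff hd1.ne' hd2.ne']
  field_simp
  linear_combination 4 * hp


theorem control_leg_length (N : ℕ) (hN : 2 ≤ N) (r : ℝ) (hr : 0 < r) :
    let θ : ℝ := π / (2 * N) + Real.arctan ((1 / 3) * Real.tan (π / (2 * N)))
    let P₀ : EuclideanSpace ℝ (Fin 2) := !₂[r * Real.cos 0, r * Real.sin 0]
    let P₁ : EuclideanSpace ℝ (Fin 2) :=
      !₂[(r / Real.cos θ) * Real.cos θ, (r / Real.cos θ) * Real.sin θ]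
    ‖P₁ - P₀‖ = r * Real.tan θ ∧
      r * Real.tan θ = 2 * r * Real.sin (π / N) / (1 + 2 * Real.cos (π / N)) := by
  intro θ P₀ P₁
  have hN0 : (0:ℝ) < N := by positivity
  have hN2 : (2:ℝ) ≤ N := by exact_mod_cast hN
  set φ : ℝ := π / (2 * N) with hφdef
  have hφpos : 0 < φ := by
    apply div_pos pi_pos; positivity
  have hφle : φ ≤ π / 4 := by
    rw [hφdef, div_le_div_iff₀ (by positivity) (by norm_num)]
    nlinarith [pi_pos]
  have hφlt : φ < π / 2 := lt_of_le_of_lt hφle (by nlinarith [pi_pos])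
  have hcφ : 0 < Real.cos φ := Real.cos_pos_of_mem_Ioo ⟨by linarith, hφlt⟩
  have hsφ : 0 < Real.sin φ := Real.sin_pos_of_pos_of_lt_pi hφpos (by nlinarith [pi_pos])
  have htφ : Real.tan φ ≤ 1 := by
    rcases lt_or_eq_of_le hφle with h | h
    · have := Real.tan_lt_tan_of_nonneg_of_lt_pi_div_two hφpos.le (by linarith [pi_pos]) h
      rw [Real.tan_pi_div_four] at this; linarith
    · rw [h, Real.tan_pi_div_four]
  have htφpos : 0 < Real.tan φ := Real.tan_pos_of_pos_of_lt_pi_div_two hφpos hφlt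
  set α : ℝ := Real.arctan ((1 / 3) * Real.tan φ) with hαdef
  have htα : Real.tan α = (1 / 3) * Real.tan φ := Real.tan_arctan _
  have hαpos : 0 < α := by
    rw [hαdef, ← Real.arctan_zero]
    exact Real.arctan_strictMono (by positivity)
  have hαlt : α < π / 4 := by
    have : α < Real.arctan 1 := Real.arctan_strictMono (by linarith)
    simpa [Real.arctan_one] using this
  have hθ : θ = φ + α := rfl
  have hθpos : 0 < θ := by rw [hθ]; linarith
  have hθlt : θ < π / 2 := by rw [hθ]; linarith
  have hcθ : 0 < Real.cos θ := Real.cos_pos_of_mem_Ioo ⟨by linarith, hθlt⟩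
  have hcα : 0 < Real.cos α := Real.cos_pos_of_mem_Ioo ⟨by linarith, by linarith⟩
  have htθ : 0 ≤ Real.tan θ := le_of_lt (Real.tan_pos_of_pos_of_lt_pi_div_two hθpos hθlt)
  constructor
  · have h1 : (r / Real.cos θ) * Real.cos θ = r := div_mul_cancel₀ r hcθ.ne'
    have h2 : (r / Real.cos θ) * Real.sin θ = r * Real.tan θ := by
      rw [Real.tan_eq_sin_div_cos]; field_simp
    rw [EuclideanSpace.norm_eq]
    simp only [Fin.sum_univ_two]
    have e0 : (P₁ - P₀) 0 = 0 := by
      simp [P₁, P₀, h1]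
    have e1 : (P₁ - P₀) 1 = r * Real.tan θ := by
      simp [P₁, P₀, h2]
    rw [e0, e1]
    simp only [norm_zero]
    rw [Real.norm_eq_abs, abs_of_nonneg (by positivity)]
    rw [show (0:ℝ)^2 + (r * Real.tan θ)^2 = (r * Real.tan θ)^2 by ring]
    exact Real.sqrt_sq (by positivity)
  · have hπN : π / N = 2 * φ := by
      rw [hφdef]; field_simp
    rw [hπN, Real.sin_two_mul, Real.cos_two_mul]
    have hsc : Real.sin φ ≤ Real.cos φ := by
      rw [Real.tan_eq_sin_div_cos, div_le_one hcφ] at htφ; exact htφ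
    have hpyth : Real.sin φ ^ 2 + Real.cos φ ^ 2 = 1 := Real.sin_sq_add_cos_sq φ
    have hlt : Real.sin φ * (1 / 3 * (Real.sin φ / Real.cos φ)) < Real.cos φ :=
      aux_lt hsφ hcφ hsc
    have hsα : Real.sin α = Real.cos α * Real.tan α := by
      rw [Real.tan_eq_sin_div_cos]; field_simp
    have htanθ : Real.tan θ = (Real.sin φ + Real.cos φ * Real.tan α) /
        (Real.cos φ - Real.sin φ * Real.tan α) := by
      rw [hθ, Real.tan_eq_sin_div_cos, Real.sin_add, Real.cos_add, hsα]
      rw [div_eq_div_iff (by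
        have h5 : Real.cos (φ + α) ≠ 0 :=
          (Real.cos_pos_of_mem_Ioo ⟨by linarith, by linarith⟩).ne'
        rwa [Real.cos_add, hsα] at h5)
        (by rw [htα, Real.tan_eq_sin_div_cos]; exact sub_ne_zero.2 (ne_of_gt (by linarith)))]
      ring
    rw [htanθ, htα, Real.tan_eq_sin_div_cos, aux_key hsφ hcφ hsc hpyth]
    ring
end

section
/- Let N ≥ 2, θ = π/(2N) + arctan((1/3)·tan(π/(2N))), r > 0, w = (1/3)(1 + 2cos(π/N)), and define the rational cubic Bézier curve C(t) = (P₀B₀(t) + wP₁B₁(t) + wP₂B₂(t) + P₃B₃(t)) / (B₀(t) + wB₁(t) + wB₂(t) + B₃(t)) with P₀ = r(1,0), P₁ = (r/cos θ)(cos θ, sin θ), P₂ = (r/cos θ)(cos(2π/N−θ), sin(2π/N−θ)), P₃ = r(cos(2π/N), sin(2π/N)). Then ‖C(t)‖ = r for all t ∈ [0,1], i.e., C traces a circular arc of radius r. -/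
set_option maxHeartbeats 1000000


open Real

/-- Cubic Bernstein polynomial. -/
noncomputable def bern (i : ℕ) (t : ℝ) : ℝ := (Nat.choose 3 i : ℝ) * (1 - t) ^ (3 - i) * t ^ i

/-- Rational cubic Bézier curve with endpoint weights 1 and interior weights `w₁, w₂`. -/
noncomputable def ratBezier (P₀ P₁ P₂ P₃ : EuclideanSpace ℝ (Fin 2)) (w₁ w₂ : ℝ) (t : ℝ) :
    EuclideanSpace ℝ (Fin 2) :=
  (bern 0 t + w₁ * bern 1 t + w₂ * bern 2 t + bern 3 t)⁻¹ •
    ((bern 0 t) • P₀ + (w₁ * bern 1 t) • P₁ + (w₂ * bern 2 t) • P₂ + (bern 3 t) • P₃)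

private lemma arc_key (s c t : ℝ) (h : s^2 + c^2 = 1) :
    ((1-t)^3 + (3-4*s^2)/3 * (3*(1-t)^2*t) + ((3-4*s^2)*(1-8*s^2+8*s^4)/3 + 4/3*(s*c)*(4*s*c*(1-2*s^2))) * (3*(1-t)*t^2) + (1-8*s^2+8*s^4)*t^3)^2 + ((4/3*(s*c)) * (3*(1-t)^2*t) + ((3-4*s^2)*(4*s*c*(1-2*s^2))/3 - 4/3*(s*c)*(1-8*s^2+8*s^4)) * (3*(1-t)*t^2) + (4*s*c*(1-2*s^2))*t^3)^2 = ((1-t)^3 + (3-4*s^2)/3*(3*(1-t)^2*t) + (3-4*s^2)/3*(3*(1-t)*t^2) + t^3)^2 := by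
  linear_combination ((48:ℝ)*s^2*t^2 + (-32:ℝ)*s^2*t^3 + (-64:ℝ)*s^4*t^2 + (-128:ℝ)*s^4*t^3 + (-256:ℝ)*s^4*t^4 + (640:ℝ)*s^4*t^5 + (-256:ℝ)*s^4*t^6 + (256:ℝ)*s^4*c^2*t^4 + (-512:ℝ)*s^4*c^2*t^5 + (256:ℝ)*s^4*c^2*t^6 + (256:ℝ)*s^6*t^3 + (1600:ℝ)*s^6*t^4 + (-3072:ℝ)*s^6*t^5 + (1280:ℝ)*s^6*t^6 + (-1024:ℝ)*s^6*c^2*t^4 + (2048:ℝ)*s^6*c^2*t^5 + (-1024:ℝ)*s^6*c^2*t^6 + (-2560:ℝ)*s^8*t^4 + (4608:ℝ)*s^8*t^5 + (-2048:ℝ)*s^8*t^6 + (1024:ℝ)*s^8*c^2*t^4 + (-2048:ℝ)*s^8*c^2*t^5 + (1024:ℝ)*s^8*c^2*t^6 + (1024:ℝ)*s^10*t^4 + (-2048:ℝ)*s^10*t^5 + (1024:ℝ)*s^10*t^6) * h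

private lemma arc_den_ne (s t : ℝ) (hs2 : s^2 ≤ 1/2) (ht0 : 0 ≤ t) (ht1 : t ≤ 1) :
    ((1-t)^3 + (3-4*s^2)/3*(3*(1-t)^2*t) + (3-4*s^2)/3*(3*(1-t)*t^2) + t^3) ≠ 0 := by
  have h1 : (0:ℝ) < (1-t)^2 + t^2 := by nlinarith [sq_nonneg (1 - 2*t)]
  have e1 : (0:ℝ) ≤ (1-t)^2*t := mul_nonneg (sq_nonneg _) ht0
  have e2 : (0:ℝ) ≤ (1-t)*t^2 := mul_nonneg (by linarith) (sq_nonneg _)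
  have hkey : ((1-t)^3 + (3-4*s^2)/3*(3*(1-t)^2*t) + (3-4*s^2)/3*(3*(1-t)*t^2) + t^3) = ((1-t)^2+t^2) + (2-4*s^2)*((1-t)^2*t + (1-t)*t^2) := by ring
  have h2 : (0:ℝ) ≤ 2-4*s^2 := by linarith
  have h3 := mul_nonneg h2 (add_nonneg e1 e2)
  have : (0:ℝ) < ((1-t)^3 + (3-4*s^2)/3*(3*(1-t)^2*t) + (3-4*s^2)/3*(3*(1-t)*t^2) + t^3) := by rw [hkey]; linarith
  exact ne_of_gt this

/-- Proposition 2: the special rational cubic Bézier segment is an exact circular arc. -/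
theorem ratBezier_circular_arc (N : ℕ) (hN : 2 ≤ N) (r : ℝ) (hr : 0 < r) :
    let θ : ℝ := π / (2 * N) + Real.arctan ((1 / 3) * Real.tan (π / (2 * N)))
    let w : ℝ := (1 / 3) * (1 + 2 * Real.cos (π / N))
    let P₀ : EuclideanSpace ℝ (Fin 2) := !₂[r, 0]
    let P₁ : EuclideanSpace ℝ (Fin 2) :=
      !₂[(r / Real.cos θ) * Real.cos θ, (r / Real.cos θ) * Real.sin θ]
    let P₂ : EuclideanSpace ℝ (Fin 2) :=
      !₂[(r / Real.cos θ) * Real.cos (2 * π / N - θ), (r / Real.cos θ) * Real.sin (2 * π / N - θ)]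
    let P₃ : EuclideanSpace ℝ (Fin 2) := !₂[r * Real.cos (2 * π / N), r * Real.sin (2 * π / N)]
    ∀ t ∈ Set.Icc (0 : ℝ) 1, ‖ratBezier P₀ P₁ P₂ P₃ w w t‖ = r := by
  intro θ w P₀ P₁ P₂ P₃ t ht
  obtain ⟨ht0, ht1⟩ := ht
  have hN0 : (N:ℝ) ≠ 0 := by positivity
  have hN2 : (2:ℝ) ≤ (N:ℝ) := by exact_mod_cast hN
  set φ : ℝ := π / (2 * N) with hφ
  have hφpos : 0 < φ := by positivity
  have hφle : φ ≤ π / 4 := by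
    rw [hφ, div_le_div_iff₀ (by positivity) (by norm_num)]
    nlinarith [pi_pos]
  have hc : 0 < Real.cos φ := Real.cos_pos_of_mem_Ioo ⟨by linarith [pi_pos], by linarith [pi_pos]⟩
  have hs : 0 < Real.sin φ := Real.sin_pos_of_pos_of_lt_pi hφpos (by linarith [pi_pos])
  set s := Real.sin φ; set c := Real.cos φ
  have hsc : s^2 + c^2 = 1 := Real.sin_sq_add_cos_sq φ
  have h2φ : π / N = 2 * φ := by rw [hφ]; field_simp
  have hcos2 : Real.cos (π / N) = 1 - 2*s^2 := by
    rw [h2φ, Real.cos_two_mul]; linear_combination 2*hsc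
  have hsin2 : Real.sin (π / N) = 2*s*c := by rw [h2φ, Real.sin_two_mul]
  have h2le : π / N ≤ π / 2 := by
    rw [div_le_div_iff₀ (by positivity) (by norm_num)]; nlinarith [pi_pos]
  have hπN : 0 < π / N := by positivity
  have hcos2nn : 0 ≤ Real.cos (π / N) :=
    Real.cos_nonneg_of_mem_Icc ⟨by nlinarith [pi_pos, hπN], h2le⟩
  have hs2 : s^2 ≤ 1/2 := by rw [hcos2] at hcos2nn; linarith
  have hk : (0:ℝ) < 3 - 4*s^2 := by linarith
  have h4φ : 2 * π / N = 2 * (π / N) := by ring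
  have hC4 : Real.cos (2 * π / N) = 1 - 8*s^2 + 8*s^4 := by
    rw [h4φ, Real.cos_two_mul, hcos2]; ring
  have hS4 : Real.sin (2 * π / N) = 4*s*c*(1-2*s^2) := by
    rw [h4φ, Real.sin_two_mul, hsin2, hcos2]; ring
  have hu : (1/3 : ℝ) * Real.tan φ = s/(3*c) := by
    rw [Real.tan_eq_sin_div_cos]; field_simp; exact mul_div_cancel_right₀ _ hc.ne'
  set u : ℝ := s/(3*c) with huv
  set V : ℝ := Real.sqrt (1 + u^2) with hV
  have hVpos : 0 < V := Real.sqrt_pos.2 (by positivity)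
  have hVsq : V^2 = 1 + u^2 := Real.sq_sqrt (by positivity)
  have hθdef : θ = φ + Real.arctan ((1/3) * Real.tan φ) := rfl
  have hcosθ : Real.cos θ = (3 - 4*s^2)/(3*c*V) := by
    rw [hθdef, Real.cos_add, hu, Real.cos_arctan, Real.sin_arctan, ← hV, huv]
    field_simp
    linear_combination 3 * Real.sin_sq_add_cos_sq φ
  have hsinθ : Real.sin θ = (4*s)/(3*V) := by
    rw [hθdef, Real.sin_add, hu, Real.cos_arctan, Real.sin_arctan, ← hV, huv]
    field_simp
    ring
  have hVne : V ≠ 0 := ne_of_gt hVpos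
  have hcne : c ≠ 0 := ne_of_gt hc
  have hkne : (3 - 4*s^2 : ℝ) ≠ 0 := ne_of_gt hk
  have hcosθne : Real.cos θ ≠ 0 := by rw [hcosθ]; positivity
  have hcsub : Real.cos (2 * π / N - θ)
      = ((1-8*s^2+8*s^4)*(3-4*s^2) + (4*s*c*(1-2*s^2))*(4*s*c)) / (3*c*V) := by
    rw [Real.cos_sub, hC4, hS4, hcosθ, hsinθ]
    field_simp
  have hssub : Real.sin (2 * π / N - θ)
      = ((4*s*c*(1-2*s^2))*(3-4*s^2) - (1-8*s^2+8*s^4)*(4*s*c)) / (3*c*V) := by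
    rw [Real.sin_sub, hC4, hS4, hcosθ, hsinθ]
    field_simp
  have hw : w = (3 - 4*s^2)/3 := by
    show (1 / 3) * (1 + 2 * Real.cos (π / N)) = _
    rw [hcos2]; ring
  have hb0 : bern 0 t = (1-t)^3 := by norm_num [bern]
  have hb1 : bern 1 t = 3*(1-t)^2*t := by norm_num [bern]
  have hb2 : bern 2 t = 3*(1-t)*t^2 := by norm_num [bern]
  have hb3 : bern 3 t = t^3 := by norm_num [bern]
  have hden : bern 0 t + w * bern 1 t + w * bern 2 t + bern 3 t = ((1-t)^3 + (3-4*s^2)/3*(3*(1-t)^2*t) + (3-4*s^2)/3*(3*(1-t)*t^2) + t^3) := by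
    rw [hw, hb0, hb1, hb2, hb3]
  have hDne := arc_den_ne s t hs2 ht0 ht1
  have hnum0 : bern 0 t * r + w * bern 1 t * (r / Real.cos θ * Real.cos θ)
      + w * bern 2 t * (r / Real.cos θ * Real.cos (2 * π / N - θ))
      + bern 3 t * (r * Real.cos (2 * π / N))
      = r * ((1-t)^3 + (3-4*s^2)/3 * (3*(1-t)^2*t) + ((3-4*s^2)*(1-8*s^2+8*s^4)/3 + 4/3*(s*c)*(4*s*c*(1-2*s^2))) * (3*(1-t)*t^2) + (1-8*s^2+8*s^4)*t^3) := by
    rw [hcosθ, hcsub, hC4, hw, hb0, hb1, hb2, hb3]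
    field_simp
  have hnum1 : bern 0 t * 0 + w * bern 1 t * (r / Real.cos θ * Real.sin θ)
      + w * bern 2 t * (r / Real.cos θ * Real.sin (2 * π / N - θ))
      + bern 3 t * (r * Real.sin (2 * π / N))
      = r * ((4/3*(s*c)) * (3*(1-t)^2*t) + ((3-4*s^2)*(4*s*c*(1-2*s^2))/3 - 4/3*(s*c)*(1-8*s^2+8*s^4)) * (3*(1-t)*t^2) + (4*s*c*(1-2*s^2))*t^3) := by
    rw [hcosθ, hsinθ, hssub, hS4, hw, hb1, hb2, hb3]
    field_simp
    ring
  rw [EuclideanSpace.norm_eq]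
  simp only [ratBezier, P₀, P₁, P₂, P₃, Fin.sum_univ_two, PiLp.add_apply, PiLp.smul_apply,
    Matrix.cons_val_zero, Matrix.cons_val_one, Matrix.head_cons, smul_eq_mul,
    Real.norm_eq_abs, sq_abs]
  rw [hnum0, hnum1, hden]
  rw [show ((((1-t)^3 + (3-4*s^2)/3*(3*(1-t)^2*t) + (3-4*s^2)/3*(3*(1-t)*t^2) + t^3))⁻¹ * (r * ((1-t)^3 + (3-4*s^2)/3 * (3*(1-t)^2*t) + ((3-4*s^2)*(1-8*s^2+8*s^4)/3 + 4/3*(s*c)*(4*s*c*(1-2*s^2))) * (3*(1-t)*t^2) + (1-8*s^2+8*s^4)*t^3)))^2 + ((((1-t)^3 + (3-4*s^2)/3*(3*(1-t)^2*t) + (3-4*s^2)/3*(3*(1-t)*t^2) + t^3))⁻¹ * (r * ((4/3*(s*c)) * (3*(1-t)^2*t) + ((3-4*s^2)*(4*s*c*(1-2*s^2))/3 - 4/3*(s*c)*(1-8*s^2+8*s^4)) * (3*(1-t)*t^2) + (4*s*c*(1-2*s^2))*t^3)))^2 = r^2 by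
    have hkey := arc_key s c t hsc
    calc (((1-t)^3 + (3-4*s^2)/3*(3*(1-t)^2*t) + (3-4*s^2)/3*(3*(1-t)*t^2) + t^3)⁻¹ * (r * ((1-t)^3 + (3-4*s^2)/3 * (3*(1-t)^2*t) + ((3-4*s^2)*(1-8*s^2+8*s^4)/3 + 4/3*(s*c)*(4*s*c*(1-2*s^2))) * (3*(1-t)*t^2) + (1-8*s^2+8*s^4)*t^3)))^2 + (((1-t)^3 + (3-4*s^2)/3*(3*(1-t)^2*t) + (3-4*s^2)/3*(3*(1-t)*t^2) + t^3)⁻¹ * (r * ((4/3*(s*c)) * (3*(1-t)^2*t) + ((3-4*s^2)*(4*s*c*(1-2*s^2))/3 - 4/3*(s*c)*(1-8*s^2+8*s^4)) * (3*(1-t)*t^2) + (4*s*c*(1-2*s^2))*t^3)))^2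
        = (((1-t)^3 + (3-4*s^2)/3 * (3*(1-t)^2*t) + ((3-4*s^2)*(1-8*s^2+8*s^4)/3 + 4/3*(s*c)*(4*s*c*(1-2*s^2))) * (3*(1-t)*t^2) + (1-8*s^2+8*s^4)*t^3)^2 + ((4/3*(s*c)) * (3*(1-t)^2*t) + ((3-4*s^2)*(4*s*c*(1-2*s^2))/3 - 4/3*(s*c)*(1-8*s^2+8*s^4)) * (3*(1-t)*t^2) + (4*s*c*(1-2*s^2))*t^3)^2) * (((1-t)^3 + (3-4*s^2)/3*(3*(1-t)^2*t) + (3-4*s^2)/3*(3*(1-t)*t^2) + t^3)⁻¹ * ((1-t)^3 + (3-4*s^2)/3*(3*(1-t)^2*t) + (3-4*s^2)/3*(3*(1-t)*t^2) + t^3)⁻¹ * r^2) := by ring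
      _ = (((1-t)^3 + (3-4*s^2)/3*(3*(1-t)^2*t) + (3-4*s^2)/3*(3*(1-t)*t^2) + t^3) * ((1-t)^3 + (3-4*s^2)/3*(3*(1-t)^2*t) + (3-4*s^2)/3*(3*(1-t)*t^2) + t^3)⁻¹) * (((1-t)^3 + (3-4*s^2)/3*(3*(1-t)^2*t) + (3-4*s^2)/3*(3*(1-t)*t^2) + t^3) * ((1-t)^3 + (3-4*s^2)/3*(3*(1-t)^2*t) + (3-4*s^2)/3*(3*(1-t)*t^2) + t^3)⁻¹) * r^2 := by rw [hkey]; ring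
      _ = r^2 := by rw [mul_inv_cancel₀ hDne]; ring]
  exact Real.sqrt_sq hr.le
end

section
/- Let 0 = α₀ < α₁ < … < α_m = 2π (with the identification α_m ≡ α₀) and ρ₀, …, ρ_{m−1} > 0, and let Q_i = ρ_i(cos α_i, sin α_i) for i = 0,…,m−1. Then any ray from the origin intersects the closed polygonal curve Q₀Q₁…Q_{m−1}Q₀ in exactly one point. -/
open Real

private lemma trig_id1 (A B C : ℝ) :
    Real.sin (B - C) * Real.cos A + Real.sin (C - A) * Real.cos B
      = Real.sin (B - A) * Real.cos C := by
  rw [Real.sin_sub, Real.sin_sub, Real.sin_sub]; ring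

private lemma trig_id2 (A B C : ℝ) :
    Real.sin (B - C) * Real.sin A + Real.sin (C - A) * Real.sin B
      = Real.sin (B - A) * Real.sin C := by
  rw [Real.sin_sub, Real.sin_sub, Real.sin_sub]; ring

private lemma sin_cases {x : ℝ} (_h1 : -(2*π) < x) (h2 : x < 2*π) (h : 0 ≤ Real.sin x) :
    (0 ≤ x ∧ x ≤ π) ∨ x ≤ -π := by
  rcases le_or_gt 0 x with hx | hx
  · rcases le_or_gt x π with hx' | hx'
    · exact Or.inl ⟨hx, hx'⟩
    · exfalso
      have h3 : 0 < Real.sin (x - π) :=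
        Real.sin_pos_of_pos_of_lt_pi (by linarith) (by linarith)
      rw [Real.sin_sub_pi] at h3
      linarith
  · rcases le_or_gt x (-π) with hx' | hx'
    · exact Or.inr hx'
    · exfalso
      have h3 : Real.sin x < 0 := Real.sin_neg_of_neg_of_neg_pi_lt hx (by linarith)
      linarith

set_option maxHeartbeats 1000000 in
/-- A closed polygon whose vertices have strictly increasing polar angles covering
`[0, 2π]` and positive radii meets every ray from the origin in exactly one point. -/
theorem polygon_meets_ray_once (m : ℕ) (hm : 3 ≤ m) (α ρ : ℕ → ℝ)
    (hα0 : α 0 = 0) (hαm : α m = 2 * π)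
    (hαmono : ∀ i < m, α i < α (i + 1))
    (hgap : ∀ i < m, α (i + 1) - α i < π)
    (hρ : ∀ i ≤ m, 0 < ρ i) (hρm : ρ m = ρ 0) :
    ∀ β : ℝ, ∃! p : ℝ × ℝ,
      (p ∈ ⋃ i ∈ Finset.range m,
          segment ℝ (ρ i • ((Real.cos (α i), Real.sin (α i)) : ℝ × ℝ))
            (ρ (i + 1) • ((Real.cos (α (i + 1)), Real.sin (α (i + 1))) : ℝ × ℝ))) ∧
      ∃ r : ℝ, 0 ≤ r ∧ p = r • ((Real.cos β, Real.sin β) : ℝ × ℝ) := by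
  classical
  have pi_pos := Real.pi_pos
  -- strict monotonicity
  have hmono : ∀ k ≤ m, ∀ j < k, α j < α k := by
    intro k
    induction k with
    | zero => intro _ j hj; omega
    | succ n ih =>
      intro hk j hj
      rcases Nat.lt_succ_iff_lt_or_eq.mp hj with h | h
      · exact (ih (by omega) j h).trans (hαmono n (by omega))
      · subst h; exact hαmono j (by omega)
  have hmonole : ∀ j k, j ≤ k → k ≤ m → α j ≤ α k := by
    intro j k hjk hk
    rcases eq_or_lt_of_le hjk with h | h
    · subst h; exact le_refl _
    · exact (hmono k hk j h).le
  have hαnn : ∀ k ≤ m, 0 ≤ α k := by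
    intro k hk
    have := hmonole 0 k (Nat.zero_le _) hk
    linarith [hα0 ▸ this]
  have hαle2 : ∀ k ≤ m, α k ≤ 2 * π := by
    intro k hk
    have := hmonole k m hk le_rfl
    linarith [hαm ▸ this]
  intro β
  -- reduce β to [0, 2π)
  obtain ⟨γ, hγ0, hγlt, hcosγ, hsinγ⟩ :
      ∃ γ, 0 ≤ γ ∧ γ < 2 * π ∧ Real.cos β = Real.cos γ ∧ Real.sin β = Real.sin γ := by
    refine ⟨toIcoMod Real.two_pi_pos 0 β, ?_, ?_, ?_, ?_⟩
    · simpa using (toIcoMod_mem_Ico Real.two_pi_pos 0 β).1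
    · simpa using (toIcoMod_mem_Ico Real.two_pi_pos 0 β).2
    · conv_lhs => rw [← toIcoMod_add_toIcoDiv_zsmul Real.two_pi_pos 0 β]
      rw [zsmul_eq_mul, Real.cos_add_int_mul_two_pi]
    · conv_lhs => rw [← toIcoMod_add_toIcoDiv_zsmul Real.two_pi_pos 0 β]
      rw [zsmul_eq_mul, Real.sin_add_int_mul_two_pi]
  rw [hcosγ, hsinγ]
  -- find the sector containing γ
  obtain ⟨i, hi_lt, hiα, hβlt⟩ : ∃ i, i < m ∧ α i ≤ γ ∧ γ < α (i + 1) := by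
    set P : ℕ → Prop := fun j => α j ≤ γ with hP
    have hP0 : P 0 := by simp [hP, hα0, hγ0]
    have hfle : Nat.findGreatest P (m - 1) ≤ m - 1 := Nat.findGreatest_le _
    refine ⟨Nat.findGreatest P (m - 1), by omega, Nat.findGreatest_spec (Nat.zero_le _) hP0, ?_⟩
    by_cases h : Nat.findGreatest P (m - 1) = m - 1
    · have h1 : Nat.findGreatest P (m - 1) + 1 = m := by omega
      rw [h1, hαm]; exact hγlt
    · have h2 : Nat.findGreatest P (m - 1) ≤ m - 1 := Nat.findGreatest_le _
      have := Nat.findGreatest_is_greatest (Nat.lt_succ_self _)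
        (show Nat.findGreatest P (m - 1) + 1 ≤ m - 1 by omega)
      exact lt_of_not_ge this
  have hgapi : α (i + 1) - α i < π := hgap i hi_lt
  have hmonoi : α i < α (i + 1) := hαmono i hi_lt
  have hρi : 0 < ρ i := hρ i (by omega)
  have hρi1 : 0 < ρ (i + 1) := hρ (i + 1) (by omega)
  have hsa : 0 ≤ Real.sin (γ - α i) :=
    Real.sin_nonneg_of_nonneg_of_le_pi (by linarith) (by linarith)
  have hsb : 0 < Real.sin (α (i + 1) - γ) :=
    Real.sin_pos_of_pos_of_lt_pi (by linarith) (by linarith)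
  have hsD : 0 < Real.sin (α (i + 1) - α i) :=
    Real.sin_pos_of_pos_of_lt_pi (by linarith) (by linarith)
  have hab : 0 < ρ i * Real.sin (γ - α i) + ρ (i + 1) * Real.sin (α (i + 1) - γ) := by
    have h1 := mul_nonneg hρi.le hsa
    have h2 := mul_pos hρi1 hsb
    linarith
  have hD : 0 < ρ i * (ρ (i + 1) * Real.sin (α (i + 1) - α i)) := by positivity
  obtain ⟨r0, hr0⟩ : ∃ r0 : ℝ, r0 = ρ i * (ρ (i + 1) * Real.sin (α (i + 1) - α i)) /
      (ρ i * Real.sin (γ - α i) + ρ (i + 1) * Real.sin (α (i + 1) - γ)) := ⟨_, rfl⟩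
  obtain ⟨t0, ht0⟩ : ∃ t0 : ℝ, t0 = ρ i * Real.sin (γ - α i) /
      (ρ i * Real.sin (γ - α i) + ρ (i + 1) * Real.sin (α (i + 1) - γ)) := ⟨_, rfl⟩
  have hr0pos : 0 < r0 := by rw [hr0]; positivity
  have ht0nn : 0 ≤ t0 := by rw [ht0]; positivity
  have ht0le : t0 ≤ 1 := by
    rw [ht0, div_le_one hab]
    have h2 := mul_pos hρi1 hsb
    linarith
  -- r0 = ρ i when γ = α i
  have hr0i : γ = α i → r0 = ρ i := by
    intro h
    rw [hr0, h]
    rw [sub_self, Real.sin_zero, mul_zero, zero_add, mul_div_assoc,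
      div_self (by positivity : ρ (i + 1) * Real.sin (α (i + 1) - α i) ≠ 0), mul_one]
  -- the candidate point lies on segment i
  have hcomp1 : (1 - t0) * (ρ i * Real.cos (α i)) + t0 * (ρ (i + 1) * Real.cos (α (i + 1)))
      = r0 * Real.cos γ := by
    have key1 : ρ (i + 1) * Real.sin (α (i + 1) - γ) * (ρ i * Real.cos (α i))
        + ρ i * Real.sin (γ - α i) * (ρ (i + 1) * Real.cos (α (i + 1)))
        = ρ i * (ρ (i + 1) * Real.sin (α (i + 1) - α i)) * Real.cos γ := by
      linear_combination (ρ i * ρ (i + 1)) * trig_id1 (α i) (α (i + 1)) γ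
    rw [ht0, hr0, div_mul_eq_mul_div, div_mul_eq_mul_div, one_sub_div hab.ne',
      div_mul_eq_mul_div, ← add_div, div_eq_div_iff hab.ne' hab.ne']
    linear_combination (ρ i * Real.sin (γ - α i) + ρ (i + 1) * Real.sin (α (i + 1) - γ)) * key1
  have hcomp2 : (1 - t0) * (ρ i * Real.sin (α i)) + t0 * (ρ (i + 1) * Real.sin (α (i + 1)))
      = r0 * Real.sin γ := by
    have key2 : ρ (i + 1) * Real.sin (α (i + 1) - γ) * (ρ i * Real.sin (α i))
        + ρ i * Real.sin (γ - α i) * (ρ (i + 1) * Real.sin (α (i + 1)))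
        = ρ i * (ρ (i + 1) * Real.sin (α (i + 1) - α i)) * Real.sin γ := by
      linear_combination (ρ i * ρ (i + 1)) * trig_id2 (α i) (α (i + 1)) γ
    rw [ht0, hr0, div_mul_eq_mul_div, div_mul_eq_mul_div, one_sub_div hab.ne',
      div_mul_eq_mul_div, ← add_div, div_eq_div_iff hab.ne' hab.ne']
    linear_combination (ρ i * Real.sin (γ - α i) + ρ (i + 1) * Real.sin (α (i + 1) - γ)) * key2
  have hseg : (1 - t0) • (ρ i • ((Real.cos (α i), Real.sin (α i)) : ℝ × ℝ))
      + t0 • (ρ (i + 1) • ((Real.cos (α (i + 1)), Real.sin (α (i + 1))) : ℝ × ℝ))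
      = r0 • ((Real.cos γ, Real.sin γ) : ℝ × ℝ) := by
    simp only [Prod.smul_mk, Prod.mk_add_mk, Prod.mk.injEq, smul_eq_mul]
    exact ⟨hcomp1, hcomp2⟩
  refine ⟨r0 • ((Real.cos γ, Real.sin γ) : ℝ × ℝ), ⟨?_, r0, hr0pos.le, rfl⟩, ?_⟩
  · simp only [Set.mem_iUnion]
    exact ⟨i, Finset.mem_range.mpr hi_lt,
      ⟨1 - t0, t0, by linarith, ht0nn, by ring, hseg⟩⟩
  -- uniqueness
  rintro p ⟨hmem, r, hrnn, rfl⟩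
  simp only [Set.mem_iUnion] at hmem
  obtain ⟨j, hjmem, hsegj⟩ := hmem
  have hj : j < m := Finset.mem_range.mp hjmem
  obtain ⟨s, t, hs, ht, hst, heq⟩ := hsegj
  simp only [Prod.smul_mk, Prod.mk_add_mk, Prod.mk.injEq, smul_eq_mul] at heq
  obtain ⟨h1, h2⟩ := heq
  have hρj : 0 < ρ j := hρ j (by omega)
  have hρj1 : 0 < ρ (j + 1) := hρ (j + 1) (by omega)
  have hmonoj : α j < α (j + 1) := hαmono j hj
  have hgapj : α (j + 1) - α j < π := hgap j hj
  have hsDj : 0 < Real.sin (α (j + 1) - α j) :=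
    Real.sin_pos_of_pos_of_lt_pi (by linarith) (by linarith)
  have hαj0 : 0 ≤ α j := hαnn j (by omega)
  have hαj2 : α j < 2 * π := by
    have := hmono m le_rfl j hj; linarith [hαm ▸ this]
  have hαj1pos : 0 < α (j + 1) := by
    have := hαnn j (by omega); linarith
  have hαj1le : α (j + 1) ≤ 2 * π := hαle2 (j + 1) (by omega)
  -- the two fundamental determinant equations
  have E1 : t * (ρ j * (ρ (j + 1) * Real.sin (α (j + 1) - α j)))
      = r * (ρ j * Real.sin (γ - α j)) := by
    rw [Real.sin_sub, Real.sin_sub]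
    linear_combination (ρ j * Real.cos (α j)) * h2 - (ρ j * Real.sin (α j)) * h1
  have E2 : s * (ρ j * (ρ (j + 1) * Real.sin (α (j + 1) - α j)))
      = r * (ρ (j + 1) * Real.sin (α (j + 1) - γ)) := by
    rw [Real.sin_sub, Real.sin_sub]
    linear_combination (ρ (j + 1) * Real.sin (α (j + 1))) * h1
      - (ρ (j + 1) * Real.cos (α (j + 1))) * h2
  have hDj : 0 < ρ j * (ρ (j + 1) * Real.sin (α (j + 1) - α j)) := by positivity
  have hrpos : 0 < r := by
    rcases hrnn.eq_or_lt with h | h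
    · exfalso
      rw [← h] at E1 E2
      simp only [zero_mul] at E1 E2
      have ht0' : t = 0 := by
        rcases mul_eq_zero.mp E1 with h' | h'
        · exact h'
        · exact absurd h' hDj.ne'
      have hs0' : s = 0 := by
        rcases mul_eq_zero.mp E2 with h' | h'
        · exact h'
        · exact absurd h' hDj.ne'
      rw [ht0', hs0'] at hst; norm_num at hst
    · exact h
  have hsj1 : 0 ≤ Real.sin (γ - α j) := by
    by_contra hneg
    push_neg at hneg
    have hlt : r * (ρ j * Real.sin (γ - α j)) < 0 :=
      mul_neg_of_pos_of_neg hrpos (mul_neg_of_pos_of_neg hρj hneg)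
    have hge : 0 ≤ t * (ρ j * (ρ (j + 1) * Real.sin (α (j + 1) - α j))) :=
      mul_nonneg ht hDj.le
    rw [E1] at hge
    linarith
  have hsj2 : 0 ≤ Real.sin (α (j + 1) - γ) := by
    by_contra hneg
    push_neg at hneg
    have hlt : r * (ρ (j + 1) * Real.sin (α (j + 1) - γ)) < 0 :=
      mul_neg_of_pos_of_neg hrpos (mul_neg_of_pos_of_neg hρj1 hneg)
    have hge : 0 ≤ s * (ρ j * (ρ (j + 1) * Real.sin (α (j + 1) - α j))) :=
      mul_nonneg hs hDj.le
    rw [E2] at hge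
    linarith
  -- It suffices to show r = r0
  suffices hr : r = r0 by rw [hr]
  rcases eq_or_lt_of_le (show α (j + 1) - γ ≤ 2 * π by linarith) with hw | hy2
  · -- wrap-around case: γ = 0, α (j+1) = 2π
    have hγ0' : γ = 0 := by linarith
    have hαj1 : α (j + 1) = 2 * π := by linarith
    have hjm : j + 1 = m := by
      by_contra h
      have := hmono m le_rfl (j + 1) (by omega)
      rw [hαj1, hαm] at this; linarith
    -- sin (α (j+1) - γ) = 0, hence s = 0, t = 1
    have hz : Real.sin (α (j + 1) - γ) = 0 := by
      rw [hαj1, hγ0', sub_zero, Real.sin_two_pi]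
    rw [hz, mul_zero, mul_zero] at E2
    have hs0' : s = 0 := by
      rcases mul_eq_zero.mp E2 with h' | h'
      · exact h'
      · exact absurd h' hDj.ne'
    have ht1 : t = 1 := by linarith
    -- now E1 gives r = ρ (j+1) = ρ 0
    have hsin_eq : Real.sin (γ - α j) = Real.sin (α (j + 1) - α j) := by
      rw [hγ0', hαj1, zero_sub]
      rw [show 2 * π - α j = -α j + 2 * π by ring]
      rw [Real.sin_add_two_pi]
    rw [ht1, one_mul, hsin_eq] at E1
    have hr_eq : r = ρ (j + 1) := by
      have h' : r * (ρ j * Real.sin (α (j + 1) - α j))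
          = ρ (j + 1) * (ρ j * Real.sin (α (j + 1) - α j)) := by
        rw [← E1]; ring
      exact mul_right_cancel₀ (by positivity) h'
    -- and r0 = ρ 0
    have hi0 : i = 0 := by
      by_contra h
      have := hmono i (by omega) 0 (by omega)
      rw [hα0] at this
      have := hiα
      rw [hγ0'] at this
      linarith
    have : r0 = ρ i := hr0i (by rw [hγ0', hi0, hα0])
    rw [hr_eq, this, hi0]
    rw [hjm, hρm]
  · -- main case
    have hx1 : -(2 * π) < γ - α j := by linarith
    have hx2 : γ - α j < 2 * π := by linarith
    have hy1 : -(2 * π) < α (j + 1) - γ := by linarith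
    rcases sin_cases hx1 hx2 hsj1 with ⟨hxa, hxb⟩ | hxc
    · rcases sin_cases hy1 hy2 hsj2 with ⟨hya, hyb⟩ | hyc
      · -- α j ≤ γ ≤ α (j+1)
        rcases lt_trichotomy j i with hji | hji
        · -- j < i forces j + 1 = i and γ = α i
          have hj1i : j + 1 ≤ i := by omega
          have hle1 : α (j + 1) ≤ α i := hmonole (j + 1) i hj1i (by omega)
          have hγeq : γ = α i := le_antisymm (by linarith) hiα
          have hγeq' : γ = α (j + 1) := by linarith
          -- sin (α(j+1) - γ) = 0 gives s = 0, t = 1, r = ρ (j+1)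
          have hz : Real.sin (α (j + 1) - γ) = 0 := by
            rw [hγeq', sub_self, Real.sin_zero]
          rw [hz, mul_zero, mul_zero] at E2
          have hs0' : s = 0 := by
            rcases mul_eq_zero.mp E2 with h' | h'
            · exact h'
            · exact absurd h' hDj.ne'
          have ht1 : t = 1 := by linarith
          have hsin_eq : Real.sin (γ - α j) = Real.sin (α (j + 1) - α j) := by
            rw [hγeq']
          rw [ht1, one_mul, hsin_eq] at E1
          have hr_eq : r = ρ (j + 1) := by
            have h' : r * (ρ j * Real.sin (α (j + 1) - α j))
                = ρ (j + 1) * (ρ j * Real.sin (α (j + 1) - α j)) := by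
              rw [← E1]; ring
            exact mul_right_cancel₀ (by positivity) h'
          have hieq : i = j + 1 := by
            by_contra h
            have := hmono i (by omega) (j + 1) (by omega)
            linarith [hγeq ▸ hγeq' ▸ this]
          rw [hr_eq, hr0i hγeq, hieq]
        · rcases hji with hji | hji
          · -- j = i : sum the two equations
            subst hji
            rw [hr0, eq_div_iff hab.ne']
            linear_combination (ρ j * (ρ (j + 1) * Real.sin (α (j + 1) - α j))) * hst - E1 - E2
          · -- i < j impossible
            have : α (i + 1) ≤ α j := hmonole (i + 1) j (by omega) (by omega)
            linarith
      · -- γ ≥ α (j+1) + π : impossible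
        linarith
    · rcases sin_cases hy1 hy2 hsj2 with ⟨hya, hyb⟩ | hyc
      · linarith
      · linarith
end
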